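/- With the combinatorial model of the Kirillov–Reshetikhin crystal B_s = B^{1,2s} of type C_n^{(1)}, the maps Φ_j, and the weight sets wt B(kθ) as in the context, for every 1 ≤ k ≤ l one has ⋃_{j=1}^{n} Φ_j(B((k−1)θ) ⊂ B_{l−1}) = { b ∈ B(kθ) ⊂ B_l : wt b ∈ wt B((k−1)θ) }. -/
import Mathlib


/-- Model of the KR crystal `B^{1,2s}` of type `C_n^{(1)}`: a tuple
`(x₁, …, x_n, x̄_n, …, x̄₁)`, encoded as the pair of `x = b.1` and `x̄ = b.2`. -/
abbrev CCrystal (n : ℕ) := (Fin n → ℕ) × (Fin n → ℕ)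

/-- `∑_{j=1}^{n} (x_j + x̄_j)`. -/
def csum (n : ℕ) (b : CCrystal n) : ℕ := ∑ j, (b.1 j + b.2 j)

/-- Membership in `B_s = B^{1,2s}`: the coordinate sum is even and at most `2s`. -/
def inBC (n s : ℕ) (b : CCrystal n) : Prop := Even (csum n b) ∧ csum n b ≤ 2 * s

/-- The weight `wt b = (x₁ − x̄₁, …, x_n − x̄_n)`. -/
def wtCof (n : ℕ) (b : CCrystal n) : Fin n → ℤ := fun j => (b.1 j : ℤ) - (b.2 j : ℤ)

/-- `f̃_0` on `B_s`: `x₁ ↦ x₁ + 2` if `x₁ ≥ x̄₁`; `(x₁, x̄₁) ↦ (x₁ + 1, x̄₁ − 1)` if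
`x₁ = x̄₁ − 1`; `x̄₁ ↦ x̄₁ − 2` if `x₁ ≤ x̄₁ − 2`; the result is `0` (`none`) if the
resulting tuple does not lie in `B_s`. -/
def fC0 (n : ℕ) (hn : 0 < n) (s : ℕ) (b : CCrystal n) : Option (CCrystal n) :=
  let i0 : Fin n := ⟨0, hn⟩
  let b' : CCrystal n :=
    if b.2 i0 ≤ b.1 i0 then (Function.update b.1 i0 (b.1 i0 + 2), b.2)
    else if b.1 i0 + 1 = b.2 i0 then
      (Function.update b.1 i0 (b.1 i0 + 1), Function.update b.2 i0 (b.2 i0 - 1))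
    else (b.1, Function.update b.2 i0 (b.2 i0 - 2))
  if csum n b' ≤ 2 * s then some b' else none

/-- `f̃_i` for `1 ≤ i ≤ n−1` (here `i = i₀ + 1`): `(x_i, x_{i+1}) ↦ (x_i − 1, x_{i+1} + 1)`
if `x_{i+1} ≥ x̄_{i+1}`, and `(x̄_{i+1}, x̄_i) ↦ (x̄_{i+1} − 1, x̄_i + 1)` otherwise;
the result is `0` (`none`) if a coordinate would become negative. -/
def fCi (n i₀ : ℕ) (h : i₀ + 1 < n) (b : CCrystal n) : Option (CCrystal n) :=
  let a : Fin n := ⟨i₀, by omega⟩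
  let a' : Fin n := ⟨i₀ + 1, h⟩
  if b.2 a' ≤ b.1 a' then
    if 0 < b.1 a then
      some (Function.update (Function.update b.1 a (b.1 a - 1)) a' (b.1 a' + 1), b.2)
    else none
  else
    if 0 < b.2 a' then
      some (b.1, Function.update (Function.update b.2 a' (b.2 a' - 1)) a (b.2 a + 1))
    else none

/-- `f̃_n`: `(x_n, x̄_n) ↦ (x_n − 1, x̄_n + 1)`; `0` (`none`) if `x_n = 0`. -/
def fCn (n : ℕ) (hn : 0 < n) (b : CCrystal n) : Option (CCrystal n) :=
  let a : Fin n := ⟨n - 1, by omega⟩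
  if 0 < b.1 a then
    some (Function.update b.1 a (b.1 a - 1), Function.update b.2 a (b.2 a + 1))
  else none

/-- `Φ_j : B_{l−1} → B_l` adds `1` to both `x_j` and `x̄_j` (here the index `j + 1`
for `j : Fin n`). -/
def Phi (n : ℕ) (j : Fin n) (b : CCrystal n) : CCrystal n :=
  (Function.update b.1 j (b.1 j + 1), Function.update b.2 j (b.2 j + 1))

/-- Type `Cₙ` weight membership: `m ∈ wt B(kθ)` (θ = 2e₁); empty for `k < 0`. -/
def wtC (n : ℕ) (k : ℤ) (m : Fin n → ℤ) : Prop :=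
  0 ≤ k ∧ ∃ τ : Equiv.Perm (Fin n), ∃ ε : Fin n → ℤ,
    (∀ j, ε j = 1 ∨ ε j = -1) ∧
    (∀ i j : Fin n, i ≤ j → ε j * m (τ j) ≤ ε i * m (τ i)) ∧
    (∀ j, 0 ≤ ε j * m (τ j)) ∧
    (∀ i : ℕ, 1 ≤ i → i ≤ n - 1 →
      ∑ j ∈ Finset.univ.filter (fun j : Fin n => (j : ℕ) < i), ε j * m (τ j) ≤ 2 * k) ∧
    (∃ t : ℤ, 0 ≤ t ∧ 2 * k - ∑ j, ε j * m (τ j) = 2 * t)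


lemma csum_Phi (n : ℕ) (j : Fin n) (b : CCrystal n) :
    csum n (Phi n j b) = csum n b + 2 := by
  unfold csum Phi
  have : ∀ i : Fin n, (Function.update b.1 j (b.1 j + 1) i + Function.update b.2 j (b.2 j + 1) i)
      = (b.1 i + b.2 i) + (if i = j then 2 else 0) := by
    intro i
    by_cases h : i = j <;> simp [Function.update, h]
    omega
  simp only [this, Finset.sum_add_distrib, Finset.sum_ite_eq' Finset.univ j]
  simp

lemma wtCof_Phi (n : ℕ) (j : Fin n) (b : CCrystal n) :
    wtCof n (Phi n j b) = wtCof n b := by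
  funext i
  unfold wtCof Phi
  by_cases h : i = j <;> simp [Function.update, h] <;> push_cast <;> ring

lemma sum_abs_eq (n : ℕ) (b : CCrystal n) :
    ∑ j, |wtCof n b j| = (csum n b : ℤ) - 2 * ∑ j, (min (b.1 j) (b.2 j) : ℤ) := by
  unfold csum wtCof
  push_cast
  rw [Finset.mul_sum, ← Finset.sum_sub_distrib]
  refine Finset.sum_congr rfl fun j _ => ?_
  rcases le_total (b.1 j) (b.2 j) with h | h
  · rw [abs_of_nonpos (by simp [h])]; omega
  · rw [abs_of_nonneg (by simp [h])]; omega


lemma wtC_iff (n : ℕ) (k : ℤ) (m : Fin n → ℤ) (hk : 0 ≤ k) :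
    wtC n k m ↔ ∃ t : ℤ, 0 ≤ t ∧ 2 * k - ∑ j, |m j| = 2 * t := by
  constructor
  · rintro ⟨-, τ, ε, hε, -, hpos, -, t, ht, hsum⟩
    have key : ∀ j, ε j * m (τ j) = |m (τ j)| := by
      intro j
      rcases hε j with h | h <;> have := hpos j <;> rw [h] at this ⊢
      · rw [one_mul] at this ⊢; exact (abs_of_nonneg this).symm
      · rw [neg_one_mul] at this ⊢
        rw [abs_of_nonpos (by linarith)]
    refine ⟨t, ht, ?_⟩
    rw [← hsum]
    congr 1
    rw [Finset.sum_congr rfl fun j _ => key j]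
    exact (Equiv.sum_comp τ (fun j => |m j|)).symm
  · rintro ⟨t, ht, hsum⟩
    refine ⟨hk, Tuple.sort (fun j => -|m j|), fun j => if 0 ≤ m (Tuple.sort (fun j => -|m j|) j) then 1 else -1, ?_, ?_, ?_, ?_, ?_⟩
    · intro j; dsimp only; split <;> simp
    all_goals
      set τ := Tuple.sort (fun j => -|m j|) with hτ
    · intro i j hij
      dsimp only
      have key : ∀ j, (if 0 ≤ m (τ j) then (1:ℤ) else -1) * m (τ j) = |m (τ j)| := by
        intro j; split <;> rename_i h
        · rw [one_mul, abs_of_nonneg h]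
        · rw [neg_one_mul, abs_of_nonpos (by linarith)]
      rw [key, key]
      have := Tuple.monotone_sort (fun j => -|m j|) hij
      simpa using this
    · intro j; dsimp only; split <;> rename_i h
      · rw [one_mul]; exact h
      · rw [neg_one_mul]; linarith
    · intro i hi1 hi2
      dsimp only
      have key : ∀ j, (if 0 ≤ m (τ j) then (1:ℤ) else -1) * m (τ j) = |m (τ j)| := by
        intro j; split <;> rename_i h
        · rw [one_mul, abs_of_nonneg h]
        · rw [neg_one_mul, abs_of_nonpos (by linarith)]
      calc ∑ j ∈ Finset.univ.filter (fun j : Fin n => (j : ℕ) < i),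
            (if 0 ≤ m (τ j) then (1:ℤ) else -1) * m (τ j)
          = ∑ j ∈ Finset.univ.filter (fun j : Fin n => (j : ℕ) < i), |m (τ j)| :=
            Finset.sum_congr rfl fun j _ => key j
        _ ≤ ∑ j, |m (τ j)| := Finset.sum_le_sum_of_subset_of_nonneg
            (Finset.filter_subset _ _) (fun j _ _ => abs_nonneg _)
        _ = ∑ j, |m j| := Equiv.sum_comp τ (fun j => |m j|)
        _ ≤ 2 * k := by linarith
    · dsimp only
      have key : ∀ j, (if 0 ≤ m (τ j) then (1:ℤ) else -1) * m (τ j) = |m (τ j)| := by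
        intro j; split <;> rename_i h
        · rw [one_mul, abs_of_nonneg h]
        · rw [neg_one_mul, abs_of_nonpos (by linarith)]
      refine ⟨t, ht, ?_⟩
      rw [Finset.sum_congr rfl fun j _ => key j, Equiv.sum_comp τ (fun j => |m j|)]
      exact hsum

theorem statement_13 (n l : ℕ) (hn : 2 ≤ n) (hl : 1 ≤ l)
    (k : ℕ) (hk1 : 1 ≤ k) (hkl : k ≤ l) :
    {b : CCrystal n | ∃ j : Fin n, ∃ b₀ : CCrystal n,
        csum n b₀ = 2 * (k - 1) ∧ Phi n j b₀ = b}
      = {b : CCrystal n | csum n b = 2 * k ∧ wtC n ((k : ℤ) - 1) (wtCof n b)} := by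
  have hk0 : (0:ℤ) ≤ (k:ℤ) - 1 := by omega
  ext b
  simp only [Set.mem_setOf_eq]
  constructor
  · rintro ⟨j, b₀, hcs, rfl⟩
    have hc : csum n (Phi n j b₀) = 2 * k := by rw [csum_Phi, hcs]; omega
    refine ⟨hc, (wtC_iff n _ _ hk0).mpr ?_⟩
    rw [wtCof_Phi]
    refine ⟨∑ i, (min (b₀.1 i) (b₀.2 i) : ℤ), Finset.sum_nonneg fun i _ => by positivity, ?_⟩
    rw [sum_abs_eq, hcs]
    omega
  · rintro ⟨hcs, hwt⟩
    obtain ⟨t, ht, hsum⟩ := (wtC_iff n _ _ hk0).mp hwt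
    rw [sum_abs_eq, hcs] at hsum
    have hcast : ((∑ i, min (b.1 i) (b.2 i) : ℕ) : ℤ) = ∑ i, (min (b.1 i) (b.2 i) : ℤ) := by
      push_cast; rfl
    have hmin : 1 ≤ ∑ i, min (b.1 i) (b.2 i) := by omega
    have : ∃ j : Fin n, 1 ≤ min (b.1 j) (b.2 j) := by
      by_contra h
      push_neg at h
      have hz : ∑ i, min (b.1 i) (b.2 i) = 0 :=
        Finset.sum_eq_zero fun i _ => by have := h i; omega
      omega
    obtain ⟨j, hj⟩ := this
    have h1 : 1 ≤ b.1 j := le_trans hj (min_le_left _ _)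
    have h2 : 1 ≤ b.2 j := le_trans hj (min_le_right _ _)
    refine ⟨j, (Function.update b.1 j (b.1 j - 1), Function.update b.2 j (b.2 j - 1)), ?_, ?_⟩
    · have hphi : Phi n j (Function.update b.1 j (b.1 j - 1), Function.update b.2 j (b.2 j - 1)) = b := by
        unfold Phi
        refine Prod.ext ?_ ?_ <;> dsimp only <;> funext i <;>
          by_cases h : i = j <;> simp [Function.update, h] <;> omega
      have := csum_Phi n j (Function.update b.1 j (b.1 j - 1), Function.update b.2 j (b.2 j - 1))
      rw [hphi, hcs] at this
      omega
    · unfold Phi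
      refine Prod.ext ?_ ?_ <;> dsimp only <;> funext i <;>
        by_cases h : i = j <;> simp [Function.update, h] <;> omega
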